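/- If a finite poset P contains the standard example S_3 as a subposet, then the cover graph of P contains a cycle. -/

import Mathlib

/-- `y` covers `x` in the partial order `P`. -/
def Covers {α : Type*} (P : PartialOrder α) (x y : α) : Prop :=
  P.lt x y ∧ ∀ z, P.lt x z → ¬ P.lt z y

/-- The cover graph of a partial order: `x` is adjacent to `y` iff one covers the other. -/
def coverGraph {α : Type*} (P : PartialOrder α) : SimpleGraph α where
  Adj x y := Covers P x y ∨ Covers P y x
  symm := ⟨fun _ _ h => h.symm⟩
  loopless := by
    refine ⟨?_⟩
    intro x h
    letI := P
    rcases h with ⟨h1, _⟩ | ⟨h1, _⟩ <;> exact lt_irrefl x h1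

/-- The strict order of the standard example `S_n` on `Fin n ⊕ Fin n`:
`a_i = Sum.inl i`, `b_j = Sum.inr j`, and the only strict relations are `a_i < b_j` for `i ≠ j`. -/
def stdLT (n : ℕ) : (Fin n ⊕ Fin n) → (Fin n ⊕ Fin n) → Prop
  | Sum.inl i, Sum.inr j => i ≠ j
  | _, _ => False

/-- `P` contains the standard example `S_n` as a subposet. -/
def ContainsStdExample {α : Type*} (P : PartialOrder α) (n : ℕ) : Prop :=
  ∃ f : Fin n ⊕ Fin n → α, Function.Injective f ∧
    ∀ x y, stdLT n x y ↔ P.lt (f x) (f y)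

/-!
Suppose the cover graph is a forest. In a finite poset every relation `x ≤ y` is realised by a
walk of covers inside the interval `[x, y]`, so for distinct `i, j, k` the elements `b_j` and
`b_k` are joined by a walk through `a_i` on which every vertex lies above `a_i` and below `b_j` or
`b_k`. In a forest, the three walks so obtained between `b_0, b_1, b_2` share a vertex `m`. Then
`a_0 ≤ m`, `a_2 ≤ m`, and `m ≤ b_0` or `m ≤ b_2`, contradicting `a_0 ≰ b_0` and `a_2 ≰ b_2`.
-/

namespace SimpleGraph.IsAcyclic

variable {V : Type*} {G : SimpleGraph V}

lemma exists_median_of_isPath (hG : G.IsAcyclic) {x y z : V} {p : G.Walk x y} {q : G.Walk x z}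
    (hp : p.IsPath) (hq : q.IsPath) (r : G.Walk y z) :
    ∃ m ∈ p.support, m ∈ q.support ∧ m ∈ r.support := by
  classical
  induction r with
  | nil => exact ⟨_, p.end_mem_support, q.end_mem_support, Walk.start_mem_support _⟩
  | @cons y y' z hyy' r ih =>
    by_cases hy' : y' ∈ p.support
    · obtain ⟨m, hmp, hmq, hmr⟩ := ih (hp.takeUntil hy') hq
      exact ⟨m, p.support_takeUntil_subset_support hy' hmp, hmq, by simp [hmr]⟩
    · obtain ⟨m, hmp, hmq, hmr⟩ := ih (hp.concat hy' hyy') hq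
      simp only [Walk.support_concat, List.mem_append, List.mem_singleton] at hmp
      rcases hmp with hmp | rfl
      · exact ⟨m, hmp, hmq, by simp [hmr]⟩
      -- If the median `y'` falls off `p`, then in a forest `q` reaches `y'` through `y`.
      · have hyq : y ∈ (q.takeUntil m hmq).support :=
          hG.mem_support_of_ne_mem_support_of_adj_of_isPath (hq.takeUntil hmq) hp hyy'.symm hy'
        exact ⟨y, p.end_mem_support, q.support_takeUntil_subset_support hmq hyq, by simp⟩

lemma exists_median (hG : G.IsAcyclic) {x y z : V} (p : G.Walk x y) (q : G.Walk x z)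
    (r : G.Walk y z) : ∃ m ∈ p.support, m ∈ q.support ∧ m ∈ r.support := by
  classical
  obtain ⟨m, hmp, hmq, hmr⟩ := hG.exists_median_of_isPath p.bypass_isPath q.bypass_isPath r
  exact ⟨m, p.support_bypass_subset_support hmp, q.support_bypass_subset_support hmq, hmr⟩

end SimpleGraph.IsAcyclic

section CoverGraph

open SimpleGraph

variable {α : Type*} [PartialOrder α]

lemma exists_coverGraph_walk_of_le [LocallyFiniteOrder α] {x y : α} (hxy : x ≤ y) :
    ∃ w : (coverGraph ‹PartialOrder α›).Walk x y, ∀ v ∈ w.support, x ≤ v ∧ v ≤ y := by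
  have hchain := le_iff_reflTransGen_covBy.mp hxy
  clear hxy
  induction hchain with
  | refl => exact ⟨.nil, by simp⟩
  | @tail z y _ hzy ih =>
    obtain ⟨w, hw⟩ := ih
    refine ⟨w.concat (show (coverGraph _).Adj z y from .inl hzy), fun v hv => ?_⟩
    simp only [Walk.support_concat, List.mem_append, List.mem_singleton] at hv
    rcases hv with hv | rfl
    · exact ⟨(hw v hv).1, (hw v hv).2.trans hzy.le⟩
    · exact ⟨(hw z w.end_mem_support).1.trans hzy.le, le_rfl⟩

lemma exists_coverGraph_walk_of_le_of_le [LocallyFiniteOrder α] {a b b' : α}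
    (hb : a ≤ b) (hb' : a ≤ b') :
    ∃ w : (coverGraph ‹PartialOrder α›).Walk b b', ∀ v ∈ w.support, a ≤ v ∧ (v ≤ b ∨ v ≤ b') := by
  obtain ⟨w, hw⟩ := exists_coverGraph_walk_of_le hb
  obtain ⟨w', hw'⟩ := exists_coverGraph_walk_of_le hb'
  refine ⟨w.reverse.append w', fun v hv => ?_⟩
  rw [Walk.mem_support_append_iff, Walk.support_reverse, List.mem_reverse] at hv
  rcases hv with hv | hv
  · exact ⟨(hw v hv).1, .inl (hw v hv).2⟩
  · exact ⟨(hw' v hv).1, .inr (hw' v hv).2⟩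

lemma ContainsStdExample.exists_le_and_not_le {n : ℕ}
    (h : ContainsStdExample ‹PartialOrder α› n) :
    ∃ a b : Fin n → α, (∀ i j, i ≠ j → a i ≤ b j) ∧ ∀ i, ¬ a i ≤ b i := by
  obtain ⟨f, hf, hlt⟩ := h
  refine ⟨fun i => f (.inl i), fun j => f (.inr j),
    fun i j hij => ((hlt (.inl i) (.inr j)).mp hij).le, fun i hle => ?_⟩
  have hne : f (.inl i) ≠ f (.inr i) := fun heq => Sum.inl_ne_inr (hf heq)
  exact (hlt (.inl i) (.inr i)).mpr (hle.lt_of_ne hne) rfl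

end CoverGraph

/-- If a finite poset `P` contains the standard example `S_3` as a
subposet, then the cover graph of `P` contains a cycle. -/
theorem coverGraph_has_cycle_of_containsStdExample_three {α : Type*} [Fintype α]
    (P : PartialOrder α) (hS3 : ContainsStdExample P 3) :
    ∃ (v : α) (w : (coverGraph P).Walk v v), w.IsCycle := by
  let := P
  let : LocallyFiniteOrder α := .ofFiniteIcc fun _ _ => Set.toFinite _
  obtain ⟨a, b, hab, hnab⟩ := hS3.exists_le_and_not_le
  by_contra! hG
  obtain ⟨p, hp⟩ := exists_coverGraph_walk_of_le_of_le (hab 2 0 (by decide)) (hab 2 1 (by decide))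
  obtain ⟨q, hq⟩ := exists_coverGraph_walk_of_le_of_le (hab 1 0 (by decide)) (hab 1 2 (by decide))
  obtain ⟨r, hr⟩ := exists_coverGraph_walk_of_le_of_le (hab 0 1 (by decide)) (hab 0 2 (by decide))
  obtain ⟨m, hmp, hmq, hmr⟩ := SimpleGraph.IsAcyclic.exists_median hG p q r
  rcases (hq m hmq).2 with hm | hm
  · exact hnab 0 ((hr m hmr).1.trans hm)
  · exact hnab 2 ((hp m hmp).1.trans hm)
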